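/- arXiv:2006.03631 — 6 statements merged into one kernel-verified Lean document; each statement's English description precedes it below -/
import Mathlib

section
/- Fix a task T ∈ Ω_T. Then for all θ', θ'' ∈ ℝ^p, ‖∇_{θ'} L^out(U(θ',T),T) − ∇_{θ''} L^out(U(θ'',T),T)‖₂ ≤ ( L₂(1 + αL₂)^{2r} + (L₁L₃/L₂)((1 + αL₂)^{2r} − 1) ) ‖θ' − θ''‖₂, where ∇_θ L^out(U(θ,T),T) denotes the gradient of the map θ ↦ L^out(U(θ,T),T). -/
open MeasureTheory ProbabilityTheory Filter Asymptotics

noncomputable section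

/-- `ℝ^p` with the Euclidean inner product. -/
abbrev Vec (p : ℕ) := EuclideanSpace ℝ (Fin p)

/-- One inner gradient-descent step `φ ↦ φ − α ∇_φ L^in(φ, T)`. -/
def gdStep (p : ℕ) (α : ℝ) {Ωt : Type*} (Lin : Vec p → Ωt → ℝ) (T : Ωt) (φ : Vec p) : Vec p :=
  φ - α • gradient (fun ψ => Lin ψ T) φ

/-- The `r`-step inner gradient-descent map `U(θ, T)`. -/
def U (p : ℕ) (α : ℝ) (r : ℕ) {Ωt : Type*} (Lin : Vec p → Ωt → ℝ) (θ : Vec p) (T : Ωt) : Vec p :=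
  (gdStep p α Lin T)^[r] θ

/-- Assumption 1 of the paper: `L^in(·,T), L^out(·,T)` are twice differentiable with
uniformly bounded gradients (for `L^out`) and Hessians, and the Hessian of `L^in`
is uniformly Lipschitz.  The Hessian is `fderiv ℝ (gradient ·)` and `‖·‖` on it is
the operator norm. -/
def Assumption1 (p : ℕ) {Ωt : Type*} (Lin Lout : Vec p → Ωt → ℝ) (L₁ L₂ L₃ : ℝ) : Prop :=
  0 < L₁ ∧ 0 < L₂ ∧ 0 < L₃ ∧
  ∀ T : Ωt,
    Differentiable ℝ (fun φ => Lin φ T) ∧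
    Differentiable ℝ (gradient (fun φ => Lin φ T)) ∧
    Differentiable ℝ (fun φ => Lout φ T) ∧
    Differentiable ℝ (gradient (fun φ => Lout φ T)) ∧
    (∀ φ, ‖gradient (fun ψ => Lout ψ T) φ‖ ≤ L₁) ∧
    (∀ φ, ‖fderiv ℝ (gradient (fun ψ => Lin ψ T)) φ‖ ≤ L₂) ∧
    (∀ φ, ‖fderiv ℝ (gradient (fun ψ => Lout ψ T)) φ‖ ≤ L₂) ∧
    (∀ φ ψ, ‖fderiv ℝ (gradient (fun χ => Lin χ T)) φ
              - fderiv ℝ (gradient (fun χ => Lin χ T)) ψ‖ ≤ L₃ * ‖φ - ψ‖)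

/-- The exact outer gradient `∇_θ L^out(U(θ,T), T)` of the map `θ ↦ L^out(U(θ,T),T)`. -/
def outerGrad (p : ℕ) (α : ℝ) (r : ℕ) {Ωt : Type*} (Lin Lout : Vec p → Ωt → ℝ)
    (θ : Vec p) (T : Ωt) : Vec p :=
  gradient (fun θ' => Lout (U p α r Lin θ' T) T) θ

/-- The BLO objective `M(θ) = E_{T ∼ p(T)}[L^out(U(θ,T),T)]`. -/
def Mobj (p : ℕ) (α : ℝ) (r : ℕ) {Ωt : Type*} [MeasurableSpace Ωt] (μ : Measure Ωt)
    (Lin Lout : Vec p → Ωt → ℝ) (θ : Vec p) : ℝ :=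
  ∫ T, Lout (U p α r Lin θ T) T ∂μ

/-- Assumption 2 of the paper: `M(θ)`, `∇M(θ)` and `E[∇_θ L^out(U(θ,T),T)]` are
well-defined, `∇M(θ) = E[∇_θ L^out(U(θ,T),T)]`, and `M* = inf M > −∞`. -/
def Assumption2 (p : ℕ) (α : ℝ) (r : ℕ) {Ωt : Type*} [MeasurableSpace Ωt] (μ : Measure Ωt)
    (Lin Lout : Vec p → Ωt → ℝ) : Prop :=
  (∀ θ, Integrable (fun T => Lout (U p α r Lin θ T) T) μ) ∧
  (∀ θ T, DifferentiableAt ℝ (fun θ' => Lout (U p α r Lin θ' T) T) θ) ∧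
  (∀ θ, Integrable (fun T => outerGrad p α r Lin Lout θ T) μ) ∧
  (∀ θ, DifferentiableAt ℝ (Mobj p α r μ Lin Lout) θ) ∧
  (∀ θ, gradient (Mobj p α r μ Lin Lout) θ = ∫ T, outerGrad p α r Lin Lout θ T ∂μ) ∧
  BddBelow (Set.range (Mobj p α r μ Lin Lout))

/-- The UFO-BLO gradient estimator
`G(θ,T,x) = ∇_{φ_r} L^out(φ_r,T) + (x/q)(∇_θ L^out(φ_r,T) − ∇_{φ_r} L^out(φ_r,T))`. -/
def Gest (p : ℕ) (α : ℝ) (r : ℕ) (q : ℝ) {Ωt : Type*} (Lin Lout : Vec p → Ωt → ℝ)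
    (θ : Vec p) (T : Ωt) (x : ℝ) : Vec p :=
  gradient (fun φ => Lout φ T) (U p α r Lin θ T)
    + (x / q) • (outerGrad p α r Lin Lout θ T
                  - gradient (fun φ => Lout φ T) (U p α r Lin θ T))

/-- The `Bernoulli(q)` distribution on `Bool`. -/
def bern (q : ℝ) : Measure Bool :=
  (ENNReal.ofReal q) • Measure.dirac true + (ENNReal.ofReal (1 - q)) • Measure.dirac false


/-!
The derivative of `θ ↦ L^out(U(θ,T),T)` is `DL^out(U θ) ∘ DU θ`, and for a composition
`Lip(D(f ∘ g)) ≤ ‖Df‖ Lip(Dg) + Lip(Df) ‖Dg‖²`. One gradient step `φ ↦ φ − α∇L^in(φ)` has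
`‖D‖ ≤ 1 + αL₂` and `Lip(D) ≤ αL₃`, so by induction on `r`, `‖DU‖ ≤ (1 + αL₂)^r` and
`Lip(DU) ≤ αL₃ ∑_{j<2r} (1 + αL₂)^j = (L₃/L₂)((1 + αL₂)^{2r} − 1)`. The gradient is the Riesz
dual of the derivative, hence has the same Lipschitz constant.
-/

open Finset NNReal

section LipschitzDerivative

variable {𝕜 : Type*} [RCLike 𝕜]
  {E F G : Type*} [NormedAddCommGroup E] [NormedSpace 𝕜 E]
  [NormedAddCommGroup F] [NormedSpace 𝕜 F] [NormedAddCommGroup G] [NormedSpace 𝕜 G]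

theorem nnnorm_fderiv_comp_le {f : F → G} {g : E → F} {Af Ag : ℝ≥0}
    (hf : Differentiable 𝕜 f) (hg : Differentiable 𝕜 g)
    (hAf : ∀ y, ‖fderiv 𝕜 f y‖₊ ≤ Af) (hAg : ∀ x, ‖fderiv 𝕜 g x‖₊ ≤ Ag) (x : E) :
    ‖fderiv 𝕜 (f ∘ g) x‖₊ ≤ Af * Ag := by
  rw [fderiv_comp x (hf _) (hg x)]
  exact (ContinuousLinearMap.opNNNorm_comp_le _ _).trans (mul_le_mul' (hAf _) (hAg x))

/-- `D(f ∘ g) x − D(f ∘ g) x' = Df(g x) (Dg x − Dg x') + (Df(g x) − Df(g x')) Dg x'`. -/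
theorem lipschitzWith_fderiv_comp {f : F → G} {g : E → F} {Af Ag Kf Kg : ℝ≥0}
    (hf : Differentiable 𝕜 f) (hg : Differentiable 𝕜 g)
    (hAf : ∀ y, ‖fderiv 𝕜 f y‖₊ ≤ Af) (hAg : ∀ x, ‖fderiv 𝕜 g x‖₊ ≤ Ag)
    (hKf : LipschitzWith Kf (fderiv 𝕜 f)) (hKg : LipschitzWith Kg (fderiv 𝕜 g)) :
    LipschitzWith (Af * Kg + Kf * Ag ^ 2) (fderiv 𝕜 (f ∘ g)) := by
  have hgL : LipschitzWith Ag g := lipschitzWith_of_nnnorm_fderiv_le hg hAg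
  refine lipschitzWith_iff_norm_sub_le.2 fun x x' => ?_
  rw [fderiv_comp x (hf _) (hg x), fderiv_comp x' (hf _) (hg x')]
  set A := fderiv 𝕜 f (g x)
  set A' := fderiv 𝕜 f (g x')
  set J := fderiv 𝕜 g x
  set J' := fderiv 𝕜 g x'
  have hA : ‖A‖ ≤ Af := hAf (g x)
  have hJ' : ‖J'‖ ≤ Ag := hAg x'
  have hJJ' : ‖J - J'‖ ≤ Kg * ‖x - x'‖ := hKg.norm_sub_le x x'
  have hAA' : ‖A - A'‖ ≤ Kf * (Ag * ‖x - x'‖) :=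
    (hKf.norm_sub_le _ _).trans (mul_le_mul_of_nonneg_left (hgL.norm_sub_le x x') Kf.2)
  calc ‖A.comp J - A'.comp J'‖ = ‖A.comp (J - J') + (A - A').comp J'‖ := by
        rw [ContinuousLinearMap.comp_sub, ContinuousLinearMap.sub_comp, sub_add_sub_cancel]
    _ ≤ ‖A‖ * ‖J - J'‖ + ‖A - A'‖ * ‖J'‖ :=
        (norm_add_le _ _).trans (add_le_add (A.opNorm_comp_le _) ((A - A').opNorm_comp_le _))
    _ ≤ Af * (Kg * ‖x - x'‖) + Kf * (Ag * ‖x - x'‖) * Ag := by gcongr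
    _ = ↑(Af * Kg + Kf * Ag ^ 2) * ‖x - x'‖ := by push_cast; ring

variable {f : E → E} {A K : ℝ≥0}

theorem nnnorm_fderiv_iterate_le (hf : Differentiable 𝕜 f) (hA : ∀ x, ‖fderiv 𝕜 f x‖₊ ≤ A)
    (n : ℕ) (x : E) : ‖fderiv 𝕜 f^[n] x‖₊ ≤ A ^ n := by
  induction n generalizing x with
  | zero => simpa [← NNReal.coe_le_coe] using ContinuousLinearMap.norm_id_le
  | succ n ih =>
    rw [Function.iterate_succ', pow_succ']
    exact nnnorm_fderiv_comp_le hf (hf.iterate n) hA ih x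

theorem pow_two_mul_le_one_add_pow (A : ℝ≥0) (n : ℕ) :
    A ^ (2 * n) ≤ 1 + A ^ (2 * n + 1) := by
  rcases le_total A 1 with h | h
  · exact (pow_le_one₀ bot_le h).trans le_self_add
  · exact (pow_le_pow_right₀ h (Nat.le_succ _)).trans le_add_self

/-- `K ∑_{j<2n} Aʲ` is a supersolution of the recursion `c₀ = 0`, `cₙ₊₁ = A cₙ + K A²ⁿ`
given by `lipschitzWith_fderiv_comp`. -/
theorem lipschitzWith_fderiv_iterate (hf : Differentiable 𝕜 f)
    (hA : ∀ x, ‖fderiv 𝕜 f x‖₊ ≤ A) (hK : LipschitzWith K (fderiv 𝕜 f)) (n : ℕ) :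
    LipschitzWith (K * ∑ j ∈ range (2 * n), A ^ j) (fderiv 𝕜 f^[n]) := by
  induction n with
  | zero => simp
  | succ n ih =>
    rw [Function.iterate_succ']
    refine (lipschitzWith_fderiv_comp hf (hf.iterate n) hA (nnnorm_fderiv_iterate_le hf hA n)
      hK ih).weaken ?_
    have hsum : ∑ j ∈ range (2 * (n + 1)), A ^ j
        = A * ∑ j ∈ range (2 * n), A ^ j + 1 + A ^ (2 * n + 1) := by
      rw [show 2 * (n + 1) = 2 * n + 1 + 1 by ring, sum_range_succ, sum_range_succ', mul_sum]
      simp only [pow_succ']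
      ring
    rw [hsum, ← pow_mul, mul_comm n 2]
    calc A * (K * ∑ j ∈ range (2 * n), A ^ j) + K * A ^ (2 * n)
        ≤ A * (K * ∑ j ∈ range (2 * n), A ^ j) + K * (1 + A ^ (2 * n + 1)) := by
          gcongr; exact pow_two_mul_le_one_add_pow A n
      _ = K * (A * ∑ j ∈ range (2 * n), A ^ j + 1 + A ^ (2 * n + 1)) := by ring

end LipschitzDerivative

section GradientStep

variable {𝕜 : Type*} [RCLike 𝕜] {E : Type*} [NormedAddCommGroup E] [NormedSpace 𝕜 E]
  {G : E → E} (c : 𝕜)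

theorem hasFDerivAt_sub_smul {x : E} (hG : DifferentiableAt 𝕜 G x) :
    HasFDerivAt (fun y => y - c • G y) (ContinuousLinearMap.id 𝕜 E - c • fderiv 𝕜 G x) x :=
  (hasFDerivAt_id x).sub (hG.hasFDerivAt.const_smul c)

theorem differentiable_sub_smul (hG : Differentiable 𝕜 G) :
    Differentiable 𝕜 (fun y => y - c • G y) :=
  fun x => (hasFDerivAt_sub_smul c (hG x)).differentiableAt

theorem nnnorm_fderiv_sub_smul_le {L : ℝ≥0} (hG : Differentiable 𝕜 G)
    (hL : ∀ x, ‖fderiv 𝕜 G x‖₊ ≤ L) (x : E) :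
    ‖fderiv 𝕜 (fun y => y - c • G y) x‖₊ ≤ 1 + ‖c‖₊ * L := by
  rw [(hasFDerivAt_sub_smul c (hG x)).fderiv]
  refine (nnnorm_sub_le _ _).trans (add_le_add ContinuousLinearMap.norm_id_le ?_)
  rw [nnnorm_smul]
  gcongr
  exact hL x

theorem lipschitzWith_fderiv_sub_smul {M : ℝ≥0} (hG : Differentiable 𝕜 G)
    (hM : LipschitzWith M (fderiv 𝕜 G)) :
    LipschitzWith (‖c‖₊ * M) (fderiv 𝕜 (fun y => y - c • G y)) := by
  have h : fderiv 𝕜 (fun y => y - c • G y)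
      = fun x => ContinuousLinearMap.id 𝕜 E - c • fderiv 𝕜 G x :=
    funext fun x => (hasFDerivAt_sub_smul c (hG x)).fderiv
  refine lipschitzWith_iff_norm_sub_le.2 fun x x' => ?_
  rw [h, sub_sub_sub_cancel_left, ← smul_sub, norm_smul, norm_sub_rev, NNReal.coe_mul,
    coe_nnnorm, mul_assoc]
  exact mul_le_mul_of_nonneg_left (hM.norm_sub_le x x') (norm_nonneg c)

end GradientStep

section Gradient

variable {𝕜 : Type*} [RCLike 𝕜] {F : Type*} [NormedAddCommGroup F] [InnerProductSpace 𝕜 F]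
  [CompleteSpace F] {f : F → 𝕜}

theorem nnnorm_fderiv_eq_nnnorm_gradient (x : F) : ‖fderiv 𝕜 f x‖₊ = ‖gradient f x‖₊ :=
  ((InnerProductSpace.toDual 𝕜 F).symm.nnnorm_map _).symm

theorem lipschitzWith_gradient_iff {K : ℝ≥0} :
    LipschitzWith K (gradient f) ↔ LipschitzWith K (fderiv 𝕜 f) :=
  (InnerProductSpace.toDual 𝕜 F).symm.isometry.lipschitzWith_iff K

end Gradient

theorem outer_gradient_lipschitz_fixed_task_general
    (p r : ℕ) (α : ℝ) (hα : 0 < α)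
    (Ωt : Type*)
    (Lin Lout : Vec p → Ωt → ℝ) (L₁ L₂ L₃ : ℝ)
    (hA1 : Assumption1 p Lin Lout L₁ L₂ L₃)
    (T : Ωt) (θ' θ'' : Vec p) :
    ‖outerGrad p α r Lin Lout θ' T - outerGrad p α r Lin Lout θ'' T‖
      ≤ (L₂ * (1 + α * L₂) ^ (2 * r)
          + (L₁ * L₃ / L₂) * ((1 + α * L₂) ^ (2 * r) - 1)) * ‖θ' - θ''‖ := by
  obtain ⟨hL₁, hL₂, hL₃, hA⟩ := hA1
  obtain ⟨-, hGin, hLout, hGout, hgout, hHin, hHout, hHinLip⟩ := hA T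
  lift L₁ to ℝ≥0 using hL₁.le
  lift L₂ to ℝ≥0 using hL₂.le
  lift L₃ to ℝ≥0 using hL₃.le
  have hstep : Differentiable ℝ (gdStep p α Lin T) := differentiable_sub_smul α hGin
  have hstepA : ∀ φ, ‖fderiv ℝ (gdStep p α Lin T) φ‖₊ ≤ 1 + ‖α‖₊ * L₂ :=
    nnnorm_fderiv_sub_smul_le α hGin fun φ => NNReal.coe_le_coe.1 (hHin φ)
  have hstepK : LipschitzWith (‖α‖₊ * L₃) (fderiv ℝ (gdStep p α Lin T)) :=
    lipschitzWith_fderiv_sub_smul α hGin (lipschitzWith_iff_norm_sub_le.2 hHinLip)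
  have hLoutA : ∀ φ, ‖fderiv ℝ (fun ψ => Lout ψ T) φ‖₊ ≤ L₁ := fun φ =>
    (nnnorm_fderiv_eq_nnnorm_gradient φ).trans_le (NNReal.coe_le_coe.1 (hgout φ))
  have hLoutK : LipschitzWith L₂ (fderiv ℝ (fun ψ => Lout ψ T)) :=
    lipschitzWith_gradient_iff.1
      (lipschitzWith_of_nnnorm_fderiv_le hGout fun φ => NNReal.coe_le_coe.1 (hHout φ))
  have hK := lipschitzWith_fderiv_comp hLout (hstep.iterate r) hLoutA
    (nnnorm_fderiv_iterate_le hstep hstepA r) hLoutK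
    (lipschitzWith_fderiv_iterate hstep hstepA hstepK r)
  refine ((lipschitzWith_gradient_iff.2 hK).norm_sub_le θ' θ'').trans_eq ?_
  congr 1
  have hgeom := geom_sum_mul (1 + α * L₂) (2 * r)
  push_cast
  rw [Real.norm_of_nonneg hα.le]
  field_simp
  linear_combination (↑L₁ * ↑L₃ : ℝ) * hgeom

theorem outer_gradient_lipschitz_fixed_task
    (p r : ℕ) (α : ℝ) (hα : 0 < α)
    (Ωt : Type*) [Nonempty Ωt]
    (Lin Lout : Vec p → Ωt → ℝ) (L₁ L₂ L₃ : ℝ)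
    (hA1 : Assumption1 p Lin Lout L₁ L₂ L₃)
    (T : Ωt) (θ' θ'' : Vec p) :
    ‖outerGrad p α r Lin Lout θ' T - outerGrad p α r Lin Lout θ'' T‖
      ≤ (L₂ * (1 + α * L₂) ^ (2 * r)
          + (L₁ * L₃ / L₂) * ((1 + α * L₂) ^ (2 * r) - 1)) * ‖θ' - θ''‖ :=
  outer_gradient_lipschitz_fixed_task_general p r α hα Ωt Lin Lout L₁ L₂ L₃ hA1 T θ' θ''
end
end

section
/- For all θ', θ'' ∈ ℝ^p, ‖∇_{θ'} M(θ') − ∇_{θ''} M(θ'')‖₂ ≤ ( L₂(1 + αL₂)^{2r} + (L₁L₃/L₂)((1 + αL₂)^{2r} − 1) ) ‖θ' − θ''‖₂. -/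
open MeasureTheory ProbabilityTheory Filter Asymptotics

noncomputable section

/-!
`∇M(θ)` is the average over tasks of `∇_θ L^out(U(θ,T),T)`, so it suffices to bound, uniformly
in `T`, the Lipschitz constant of the derivative of `L^out(·,T) ∘ U(·,T)`. For a composition,
`D(g ∘ f) x - D(g ∘ f) y = (Dg (f x) - Dg (f y)) ∘ Df x + Dg (f y) ∘ (Df x - Df y)`, so `D(g ∘ f)`
is Lipschitz with constant `Lip(Dg) ‖Df‖² + ‖Dg‖ Lip(Df)`. A gradient step `id - α ∇L^in` has
derivative bounded by `1 + αL₂` and `αL₃`-Lipschitz; iterating the composition estimate `r` times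
shows that `DU` is bounded by `(1 + αL₂)^r` and `(L₃/L₂)((1 + αL₂)^(2r) - 1)`-Lipschitz, and one
last application with `g = L^out(·,T)` (`‖Dg‖ ≤ L₁`, `Lip(Dg) ≤ L₂`) gives the constant.
-/

section Calculus

variable {E F G : Type*} [NormedAddCommGroup E] [NormedSpace ℝ E] [NormedAddCommGroup F]
  [NormedSpace ℝ F] [NormedAddCommGroup G] [NormedSpace ℝ G]

theorem ContinuousLinearMap.norm_comp_sub_comp_le (A A' : F →L[ℝ] G) (B B' : E →L[ℝ] F) :
    ‖A.comp B - A'.comp B'‖ ≤ ‖A - A'‖ * ‖B‖ + ‖A'‖ * ‖B - B'‖ :=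
  calc ‖A.comp B - A'.comp B'‖ = ‖(A - A').comp B + A'.comp (B - B')‖ := by
        rw [ContinuousLinearMap.sub_comp, ContinuousLinearMap.comp_sub, sub_add_sub_cancel]
    _ ≤ ‖A - A'‖ * ‖B‖ + ‖A'‖ * ‖B - B'‖ :=
        (norm_add_le _ _).trans (add_le_add (opNorm_comp_le _ _) (opNorm_comp_le _ _))

theorem norm_sub_le_of_norm_fderiv_le {f : E → F} (hf : Differentiable ℝ f) {C : ℝ}
    (hC : ∀ x, ‖fderiv ℝ f x‖ ≤ C) (x y : E) : ‖f x - f y‖ ≤ C * ‖x - y‖ :=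
  convex_univ.norm_image_sub_le_of_norm_fderiv_le (fun z _ => hf z) (fun z _ => hC z)
    (Set.mem_univ y) (Set.mem_univ x)

theorem norm_fderiv_comp_sub_le {f : E → F} {g : F → G} (hf : Differentiable ℝ f)
    (hg : Differentiable ℝ g) {a b Kf Kg : ℝ} (hKg : 0 ≤ Kg)
    (hf_bound : ∀ x, ‖fderiv ℝ f x‖ ≤ a)
    (hf_lip : ∀ x y, ‖fderiv ℝ f x - fderiv ℝ f y‖ ≤ Kf * ‖x - y‖)
    (hg_bound : ∀ u, ‖fderiv ℝ g u‖ ≤ b)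
    (hg_lip : ∀ u v, ‖fderiv ℝ g u - fderiv ℝ g v‖ ≤ Kg * ‖u - v‖) (x y : E) :
    ‖fderiv ℝ (g ∘ f) x - fderiv ℝ (g ∘ f) y‖ ≤ (Kg * a ^ 2 + b * Kf) * ‖x - y‖ := by
  rw [fderiv_comp x (hg _) (hf x), fderiv_comp y (hg _) (hf y)]
  have ha : 0 ≤ a := (norm_nonneg _).trans (hf_bound x)
  have hDg : ‖fderiv ℝ g (f x) - fderiv ℝ g (f y)‖ ≤ Kg * a * ‖x - y‖ :=
    calc _ ≤ Kg * ‖f x - f y‖ := hg_lip _ _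
      _ ≤ Kg * (a * ‖x - y‖) := by gcongr; exact norm_sub_le_of_norm_fderiv_le hf hf_bound x y
      _ = Kg * a * ‖x - y‖ := by ring
  calc _ ≤ ‖fderiv ℝ g (f x) - fderiv ℝ g (f y)‖ * ‖fderiv ℝ f x‖
          + ‖fderiv ℝ g (f y)‖ * ‖fderiv ℝ f x - fderiv ℝ f y‖ :=
        ContinuousLinearMap.norm_comp_sub_comp_le _ _ _ _
    _ ≤ Kg * a * ‖x - y‖ * a + b * (Kf * ‖x - y‖) :=
        add_le_add (mul_le_mul hDg (hf_bound x) (norm_nonneg _) (by positivity))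
          (mul_le_mul (hg_bound _) (hf_lip x y) (norm_nonneg _)
            ((norm_nonneg _).trans (hg_bound (f y))))
    _ = (Kg * a ^ 2 + b * Kf) * ‖x - y‖ := by ring

theorem norm_fderiv_iterate_le {S : E → E} (hS : Differentiable ℝ S) {b : ℝ} (hb : 0 ≤ b)
    (hS_bound : ∀ x, ‖fderiv ℝ S x‖ ≤ b) (n : ℕ) (x : E) : ‖fderiv ℝ S^[n] x‖ ≤ b ^ n := by
  induction n generalizing x with
  | zero => simpa using ContinuousLinearMap.norm_id_le
  | succ n ih =>
    rw [Function.iterate_succ', fderiv_comp x (hS _) (hS.iterate n x), pow_succ']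
    exact (ContinuousLinearMap.opNorm_comp_le _ _).trans
      (mul_le_mul (hS_bound _) (ih x) (norm_nonneg _) hb)

/-- The Lipschitz constants `K n` of `D(S^[n])` obey `K (n + 1) = c (b - 1) b ^ (2n) + b K n`,
whose solution `c b ^ (n - 1) (b ^ n - 1)` is bounded by the coarser `c (b ^ (2n) - 1)`. -/
theorem norm_fderiv_iterate_sub_le {S : E → E} (hS : Differentiable ℝ S) {b c : ℝ} (hb : 1 ≤ b)
    (hc : 0 ≤ c) (hS_bound : ∀ x, ‖fderiv ℝ S x‖ ≤ b)
    (hS_lip : ∀ x y, ‖fderiv ℝ S x - fderiv ℝ S y‖ ≤ c * (b - 1) * ‖x - y‖) (n : ℕ) (x y : E) :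
    ‖fderiv ℝ S^[n] x - fderiv ℝ S^[n] y‖ ≤ c * (b ^ (2 * n) - 1) * ‖x - y‖ := by
  induction n generalizing x y with
  | zero => simp
  | succ n ih =>
    have hrec : c * (b - 1) * (b ^ n) ^ 2 + b * (c * (b ^ (2 * n) - 1))
        ≤ c * (b ^ (2 * (n + 1)) - 1) := by
      have hgap : 0 ≤ c * (b ^ (2 * n) * (b - 1) ^ 2 + (b - 1)) := by
        have := pow_nonneg (zero_le_one.trans hb) (2 * n)
        have : 0 ≤ b - 1 := by linarith
        positivity
      rw [← pow_mul, mul_comm n 2, mul_add, pow_add]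
      linear_combination hgap
    rw [Function.iterate_succ']
    refine (norm_fderiv_comp_sub_le (hS.iterate n) hS (by positivity)
      (norm_fderiv_iterate_le hS (by linarith) hS_bound n) ih hS_bound hS_lip x y).trans ?_
    gcongr

end Calculus

section Gradient

variable {𝕜 F : Type*} [RCLike 𝕜] [NormedAddCommGroup F] [InnerProductSpace 𝕜 F] [CompleteSpace F]

theorem norm_gradient (f : F → 𝕜) (x : F) : ‖gradient f x‖ = ‖fderiv 𝕜 f x‖ :=
  (InnerProductSpace.toDual 𝕜 F).symm.norm_map _

theorem norm_gradient_sub_gradient (f : F → 𝕜) (x y : F) :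
    ‖gradient f x - gradient f y‖ = ‖fderiv 𝕜 f x - fderiv 𝕜 f y‖ := by
  rw [gradient, gradient, ← map_sub]
  exact (InnerProductSpace.toDual 𝕜 F).symm.norm_map _

end Gradient

section GradientStep

variable {E : Type*} [NormedAddCommGroup E] [NormedSpace ℝ E] {G : E → E} {α : ℝ}

theorem Differentiable.id_sub_const_smul (hG : Differentiable ℝ G) :
    Differentiable ℝ (fun y => y - α • G y) :=
  fun x => differentiableAt_fun_id.sub ((hG x).fun_const_smul α)

theorem fderiv_id_sub_const_smul {x : E} (hG : DifferentiableAt ℝ G x) :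
    fderiv ℝ (fun y => y - α • G y) x = ContinuousLinearMap.id ℝ E - α • fderiv ℝ G x := by
  rw [fderiv_fun_sub differentiableAt_fun_id (hG.fun_const_smul α), fderiv_fun_id,
    fderiv_fun_const_smul hG]

theorem norm_fderiv_id_sub_const_smul_le (hα : 0 ≤ α) (hG : Differentiable ℝ G) {L : ℝ}
    (hL : ∀ x, ‖fderiv ℝ G x‖ ≤ L) (x : E) :
    ‖fderiv ℝ (fun y => y - α • G y) x‖ ≤ 1 + α * L := by
  rw [fderiv_id_sub_const_smul (hG x)]
  refine (norm_sub_le _ _).trans (add_le_add ContinuousLinearMap.norm_id_le ?_)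
  rw [norm_smul, Real.norm_of_nonneg hα]
  exact mul_le_mul_of_nonneg_left (hL x) hα

theorem norm_fderiv_id_sub_const_smul_sub_le (hα : 0 ≤ α) (hG : Differentiable ℝ G) {K : ℝ}
    (hK : ∀ x y, ‖fderiv ℝ G x - fderiv ℝ G y‖ ≤ K * ‖x - y‖) (x y : E) :
    ‖fderiv ℝ (fun y => y - α • G y) x - fderiv ℝ (fun y => y - α • G y) y‖
      ≤ α * K * ‖x - y‖ := by
  rw [fderiv_id_sub_const_smul (hG x), fderiv_id_sub_const_smul (hG y), sub_sub_sub_cancel_left,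
    ← smul_sub, norm_smul, Real.norm_of_nonneg hα, norm_sub_rev, mul_assoc]
  exact mul_le_mul_of_nonneg_left (hK x y) hα

end GradientStep

section InnerLoop

variable {p r : ℕ} {α : ℝ} {Ωt : Type*} {Lin : Vec p → Ωt → ℝ} {T : Ωt} {L₂ L₃ : ℝ}

theorem differentiable_U (hG : Differentiable ℝ (gradient fun φ => Lin φ T)) :
    Differentiable ℝ (fun θ => U p α r Lin θ T) :=
  hG.id_sub_const_smul.iterate r

theorem norm_fderiv_U_le (hα : 0 ≤ α) (hG : Differentiable ℝ (gradient fun φ => Lin φ T))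
    (hH : ∀ φ, ‖fderiv ℝ (gradient fun ψ => Lin ψ T) φ‖ ≤ L₂) (θ : Vec p) :
    ‖fderiv ℝ (fun θ => U p α r Lin θ T) θ‖ ≤ (1 + α * L₂) ^ r :=
  have hL₂ : 0 ≤ L₂ := (norm_nonneg _).trans (hH 0)
  norm_fderiv_iterate_le hG.id_sub_const_smul (by positivity)
    (norm_fderiv_id_sub_const_smul_le hα hG hH) r θ

theorem norm_fderiv_U_sub_le (hα : 0 ≤ α) (hL₂ : 0 < L₂) (hL₃ : 0 ≤ L₃)
    (hG : Differentiable ℝ (gradient fun φ => Lin φ T))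
    (hH : ∀ φ, ‖fderiv ℝ (gradient fun ψ => Lin ψ T) φ‖ ≤ L₂)
    (hH_lip : ∀ φ ψ, ‖fderiv ℝ (gradient fun χ => Lin χ T) φ
      - fderiv ℝ (gradient fun χ => Lin χ T) ψ‖ ≤ L₃ * ‖φ - ψ‖) (θ θ' : Vec p) :
    ‖fderiv ℝ (fun θ => U p α r Lin θ T) θ - fderiv ℝ (fun θ => U p α r Lin θ T) θ'‖
      ≤ L₃ / L₂ * ((1 + α * L₂) ^ (2 * r) - 1) * ‖θ - θ'‖ := by
  have hstep : α * L₃ = L₃ / L₂ * (1 + α * L₂ - 1) := by field_simp; ring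
  refine norm_fderiv_iterate_sub_le hG.id_sub_const_smul
    (by nlinarith) (by positivity) (norm_fderiv_id_sub_const_smul_le hα hG hH) ?_ r θ θ'
  simpa only [hstep] using norm_fderiv_id_sub_const_smul_sub_le hα hG hH_lip

end InnerLoop

theorem norm_outerGrad_sub_le {p r : ℕ} {α : ℝ} (hα : 0 ≤ α) {Ωt : Type*}
    {Lin Lout : Vec p → Ωt → ℝ} {L₁ L₂ L₃ : ℝ} (hA1 : Assumption1 p Lin Lout L₁ L₂ L₃)
    (T : Ωt) (θ θ' : Vec p) :
    ‖outerGrad p α r Lin Lout θ T - outerGrad p α r Lin Lout θ' T‖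
      ≤ (L₂ * (1 + α * L₂) ^ (2 * r)
          + (L₁ * L₃ / L₂) * ((1 + α * L₂) ^ (2 * r) - 1)) * ‖θ - θ'‖ := by
  obtain ⟨-, hL₂, hL₃, hT⟩ := hA1
  obtain ⟨-, hLinG, hLout, hLoutG, hLout_grad, hHin, hHout, hHin_lip⟩ := hT T
  have hDLout_bound : ∀ φ, ‖fderiv ℝ (fun ψ => Lout ψ T) φ‖ ≤ L₁ := fun φ =>
    norm_gradient (fun ψ => Lout ψ T) φ ▸ hLout_grad φ
  have hDLout_lip : ∀ φ ψ, ‖fderiv ℝ (fun χ => Lout χ T) φ - fderiv ℝ (fun χ => Lout χ T) ψ‖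
      ≤ L₂ * ‖φ - ψ‖ := fun φ ψ =>
    norm_gradient_sub_gradient (fun χ => Lout χ T) φ ψ ▸
      norm_sub_le_of_norm_fderiv_le hLoutG hHout φ ψ
  rw [outerGrad, outerGrad, norm_gradient_sub_gradient]
  refine (norm_fderiv_comp_sub_le (f := fun θ => U p α r Lin θ T) (g := fun φ => Lout φ T)
    (differentiable_U hLinG) hLout hL₂.le (norm_fderiv_U_le hα hLinG hHin)
    (norm_fderiv_U_sub_le hα hL₂ hL₃.le hLinG hHin hHin_lip) hDLout_bound hDLout_lip θ θ').trans
    (le_of_eq ?_)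
  ring

theorem objective_gradient_lipschitz_general
    (p r : ℕ) (α : ℝ) (hα : 0 < α)
    (Ωt : Type*) [MeasurableSpace Ωt]
    (μ : Measure Ωt) [IsProbabilityMeasure μ]
    (Lin Lout : Vec p → Ωt → ℝ) (L₁ L₂ L₃ : ℝ)
    (hA1 : Assumption1 p Lin Lout L₁ L₂ L₃)
    (hA2 : Assumption2 p α r μ Lin Lout)
    (θ' θ'' : Vec p) :
    ‖gradient (Mobj p α r μ Lin Lout) θ' - gradient (Mobj p α r μ Lin Lout) θ''‖
      ≤ (L₂ * (1 + α * L₂) ^ (2 * r)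
          + (L₁ * L₃ / L₂) * ((1 + α * L₂) ^ (2 * r) - 1)) * ‖θ' - θ''‖ := by
  obtain ⟨-, -, hIntegrable, -, hgradient, -⟩ := hA2
  rw [hgradient, hgradient, ← integral_sub (hIntegrable θ') (hIntegrable θ'')]
  simpa using norm_integral_le_of_norm_le_const
    (ae_of_all μ fun T => norm_outerGrad_sub_le hα.le hA1 T θ' θ'')

theorem objective_gradient_lipschitz
    (p r : ℕ) (α : ℝ) (hα : 0 < α)
    (Ωt : Type*) [Nonempty Ωt] [MeasurableSpace Ωt]
    (μ : Measure Ωt) [IsProbabilityMeasure μ]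
    (Lin Lout : Vec p → Ωt → ℝ) (L₁ L₂ L₃ : ℝ)
    (hA1 : Assumption1 p Lin Lout L₁ L₂ L₃)
    (hA2 : Assumption2 p α r μ Lin Lout)
    (θ' θ'' : Vec p) :
    ‖gradient (Mobj p α r μ Lin Lout) θ' - gradient (Mobj p α r μ Lin Lout) θ''‖
      ≤ (L₂ * (1 + α * L₂) ^ (2 * r)
          + (L₁ * L₃ / L₂) * ((1 + α * L₂) ^ (2 * r) - 1)) * ‖θ' - θ''‖ :=
  objective_gradient_lipschitz_general p r α hα Ωt μ Lin Lout L₁ L₂ L₃ hA1 hA2 θ' θ''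
end
end

section
/- Fix a task T ∈ Ω_T. Then for every θ ∈ ℝ^p, ‖∇_θ L^out(U(θ,T),T)‖₂ ≤ (1 + αL₂)^r L₁, where ∇_θ L^out(U(θ,T),T) denotes the gradient of the map θ ↦ L^out(U(θ,T),T). -/
open MeasureTheory ProbabilityTheory Filter Asymptotics

noncomputable section

/-!
The Lipschitz constant of `θ ↦ L^out(U(θ,T),T)` bounds its gradient. A gradient step
`φ ↦ φ - α ∇L^in(φ)` is `(1 + αL₂)`-Lipschitz because the Hessian bound makes `∇L^in`
`L₂`-Lipschitz, so `U(·,T)` is `(1 + αL₂)^r`-Lipschitz, and `L^out(·,T)` is `L₁`-Lipschitz.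
-/

open scoped NNReal

section
variable {E : Type*} [NormedAddCommGroup E] [InnerProductSpace ℝ E] [CompleteSpace E]

lemma nnnorm_gradient_eq_nnnorm_fderiv (f : E → ℝ) (x : E) :
    ‖gradient f x‖₊ = ‖fderiv ℝ f x‖₊ :=
  (InnerProductSpace.toDual ℝ E).symm.nnnorm_map _

lemma norm_gradient_le_of_lipschitz {f : E → ℝ} {C : ℝ≥0} (hf : LipschitzWith C f) (x : E) :
    ‖gradient f x‖ ≤ C := by
  rw [← coe_nnnorm, nnnorm_gradient_eq_nnnorm_fderiv]
  exact norm_fderiv_le_of_lipschitz ℝ hf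

lemma lipschitzWith_of_nnnorm_gradient_le {f : E → ℝ} {C : ℝ≥0} (hf : Differentiable ℝ f)
    (hC : ∀ x, ‖gradient f x‖₊ ≤ C) : LipschitzWith C f :=
  lipschitzWith_of_nnnorm_fderiv_le hf fun x => nnnorm_gradient_eq_nnnorm_fderiv f x ▸ hC x

lemma lipschitzWith_sub_smul_gradient {f : E → ℝ} {K : ℝ≥0}
    (hf : Differentiable ℝ (gradient f)) (hK : ∀ x, ‖fderiv ℝ (gradient f) x‖₊ ≤ K) (α : ℝ) :
    LipschitzWith (1 + ‖α‖₊ * K) fun x => x - α • gradient f x :=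
  LipschitzWith.id.sub ((lipschitzWith_smul α).comp (lipschitzWith_of_nnnorm_fderiv_le hf hK))

end

theorem outer_gradient_bound_general
    (p r : ℕ) (α : ℝ) (hα : 0 < α)
    (Ωt : Type*)
    (Lin Lout : Vec p → Ωt → ℝ) (L₁ L₂ L₃ : ℝ)
    (hA1 : Assumption1 p Lin Lout L₁ L₂ L₃)
    (T : Ωt) (θ : Vec p) :
    ‖outerGrad p α r Lin Lout θ T‖ ≤ (1 + α * L₂) ^ r * L₁ := by
  obtain ⟨hL₁, hL₂, -, hT⟩ := hA1
  obtain ⟨-, hdiff_gradLin, hdiff_Lout, -, hgradLout, hhessLin, -, -⟩ := hT T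
  lift α to ℝ≥0 using hα.le
  lift L₁ to ℝ≥0 using hL₁.le
  lift L₂ to ℝ≥0 using hL₂.le
  have hstep : LipschitzWith (1 + α * L₂) (gdStep p α Lin T) := by
    have h := lipschitzWith_sub_smul_gradient hdiff_gradLin
      (fun φ => NNReal.coe_le_coe.mp (hhessLin φ)) α
    rwa [NNReal.nnnorm_eq] at h
  have hout : LipschitzWith L₁ (fun φ => Lout φ T) :=
    lipschitzWith_of_nnnorm_gradient_le hdiff_Lout fun φ => NNReal.coe_le_coe.mp (hgradLout φ)
  calc ‖outerGrad p α r Lin Lout θ T‖ ≤ ↑(L₁ * (1 + α * L₂) ^ r) :=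
        norm_gradient_le_of_lipschitz (hout.comp (hstep.iterate r)) θ
    _ = (1 + α * L₂) ^ r * L₁ := by push_cast; ring

theorem outer_gradient_bound
    (p r : ℕ) (α : ℝ) (hα : 0 < α)
    (Ωt : Type*) [Nonempty Ωt]
    (Lin Lout : Vec p → Ωt → ℝ) (L₁ L₂ L₃ : ℝ)
    (hA1 : Assumption1 p Lin Lout L₁ L₂ L₃)
    (T : Ωt) (θ : Vec p) :
    ‖outerGrad p α r Lin Lout θ T‖ ≤ (1 + α * L₂) ^ r * L₁ :=
  outer_gradient_bound_general p r α hα Ωt Lin Lout L₁ L₂ L₃ hA1 T θ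
end
end

section
/- For every θ ∈ ℝ^p, every T ∈ Ω_T and every x ∈ {0,1}, ‖G(θ, T, x)‖₂ ≤ (1 + q^{−1}((1 + αL₂)^r − 1)) L₁. -/
/-!
Write `g = ∇L^out(φ_r, T)`. By the chain rule `∇_θ L^out(U(θ,T), T) = DU(θ)ᵀ g`, so the
correction term of the estimator has norm `‖(DU(θ) − I)ᵀ g‖ ≤ L₁ ‖DU(θ) − I‖`. Each inner step
has Jacobian `I − α∇²L^in`, within `αL₂` of `I`, and `‖AB − I‖ ≤ (1 + ‖A − I‖)(1 + ‖B − I‖) − 1`,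
so the `r`-fold composition satisfies `‖DU(θ) − I‖ ≤ (1 + αL₂)^r − 1`. Since `|x/q| ≤ q⁻¹`,
`‖G‖ ≤ ‖g‖ + q⁻¹ L₁ ((1 + αL₂)^r − 1)`.
-/

open MeasureTheory ProbabilityTheory Filter Asymptotics

noncomputable section

theorem norm_mul_sub_one_le {R : Type*} [SeminormedRing R] (a b : R) :
    ‖a * b - 1‖ ≤ (1 + ‖a - 1‖) * (1 + ‖b - 1‖) - 1 := by
  have h : a * b - 1 = (a - 1) * (b - 1) + (a - 1) + (b - 1) := by noncomm_ring
  calc ‖a * b - 1‖ ≤ ‖(a - 1) * (b - 1)‖ + ‖a - 1‖ + ‖b - 1‖ := h ▸ norm_add₃_le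
    _ ≤ ‖a - 1‖ * ‖b - 1‖ + ‖a - 1‖ + ‖b - 1‖ := by gcongr; exact norm_mul_le _ _
    _ = (1 + ‖a - 1‖) * (1 + ‖b - 1‖) - 1 := by ring

section Iterate

variable {E : Type*} [NormedAddCommGroup E] [NormedSpace ℝ E]

theorem norm_fderiv_iterate_sub_one_le {f : E → E} {c : ℝ} (hf : Differentiable ℝ f)
    (hc : ∀ x, ‖fderiv ℝ f x - 1‖ ≤ c) (n : ℕ) (x : E) :
    ‖fderiv ℝ f^[n] x - 1‖ ≤ (1 + c) ^ n - 1 := by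
  have hc₀ : 0 ≤ c := (norm_nonneg _).trans (hc x)
  induction n with
  | zero => simp [← ContinuousLinearMap.one_def]
  | succ n ih =>
    have hchain : fderiv ℝ f^[n + 1] x = fderiv ℝ f (f^[n] x) * fderiv ℝ f^[n] x := by
      rw [Function.iterate_succ', fderiv_comp x (hf _) (hf.iterate n x)]; rfl
    calc ‖fderiv ℝ f^[n + 1] x - 1‖
        ≤ (1 + ‖fderiv ℝ f (f^[n] x) - 1‖) * (1 + ‖fderiv ℝ f^[n] x - 1‖) - 1 :=
          hchain ▸ norm_mul_sub_one_le _ _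
      _ ≤ (1 + c) * (1 + ((1 + c) ^ n - 1)) - 1 := by gcongr; exact hc _
      _ = (1 + c) ^ (n + 1) - 1 := by ring

end Iterate

section Gradient

variable {F : Type*} [NormedAddCommGroup F] [InnerProductSpace ℝ F] [CompleteSpace F]

theorem norm_gradient_eq_norm_fderiv (g : F → ℝ) (x : F) : ‖gradient g x‖ = ‖fderiv ℝ g x‖ :=
  LinearIsometryEquiv.norm_map _ _

theorem norm_gradient_comp_sub_gradient_le {g : F → ℝ} {u : F → F} {x : F}
    (hg : DifferentiableAt ℝ g (u x)) (hu : DifferentiableAt ℝ u x) :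
    ‖gradient (fun y => g (u y)) x - gradient g (u x)‖
      ≤ ‖gradient g (u x)‖ * ‖fderiv ℝ u x - 1‖ := by
  have hchain : fderiv ℝ (fun y => g (u y)) x - fderiv ℝ g (u x)
      = (fderiv ℝ g (u x)).comp (fderiv ℝ u x - 1) := by
    rw [ContinuousLinearMap.comp_sub, ContinuousLinearMap.one_def, ContinuousLinearMap.comp_id,
      ← fderiv_fun_comp x hg hu]
  rw [norm_gradient_eq_norm_fderiv, gradient, gradient, ← map_sub,
    LinearIsometryEquiv.norm_map, hchain]
  exact ContinuousLinearMap.opNorm_comp_le _ _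

end Gradient

section GradientStep

variable {p : ℕ} {α : ℝ} {Ωt : Type*} {Lin : Vec p → Ωt → ℝ} {T : Ωt}

theorem hasFDerivAt_gdStep (hG : Differentiable ℝ (gradient fun φ => Lin φ T)) (φ : Vec p) :
    HasFDerivAt (gdStep p α Lin T) (1 - α • fderiv ℝ (gradient fun ψ => Lin ψ T) φ) φ :=
  (hasFDerivAt_id φ).sub ((hG φ).hasFDerivAt.const_smul α)

theorem differentiable_gdStep (hG : Differentiable ℝ (gradient fun φ => Lin φ T)) :
    Differentiable ℝ (gdStep p α Lin T) :=
  fun φ => (hasFDerivAt_gdStep hG φ).differentiableAt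

theorem norm_fderiv_gdStep_sub_one_le {L : ℝ} (hα : 0 ≤ α)
    (hG : Differentiable ℝ (gradient fun φ => Lin φ T))
    (hH : ∀ φ, ‖fderiv ℝ (gradient fun ψ => Lin ψ T) φ‖ ≤ L) (φ : Vec p) :
    ‖fderiv ℝ (gdStep p α Lin T) φ - 1‖ ≤ α * L := by
  rw [(hasFDerivAt_gdStep hG φ).fderiv, sub_sub_cancel_left, norm_neg, norm_smul,
    Real.norm_of_nonneg hα]
  exact mul_le_mul_of_nonneg_left (hH φ) hα

end GradientStep

theorem ufo_blo_estimator_bound_general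
    (p r : ℕ) (α : ℝ) (hα : 0 < α)
    (Ωt : Type*)
    (Lin Lout : Vec p → Ωt → ℝ) (L₁ L₂ L₃ : ℝ)
    (hA1 : Assumption1 p Lin Lout L₁ L₂ L₃)
    (q : ℝ) (hq : q ∈ Set.Ioc (0 : ℝ) 1) :
    ∀ (θ : Vec p) (T : Ωt) (x : ℝ), x = 0 ∨ x = 1 →
      ‖Gest p α r q Lin Lout θ T x‖
        ≤ (1 + q⁻¹ * ((1 + α * L₂) ^ r - 1)) * L₁ := by
  obtain ⟨hL₁, -, -, hT⟩ := hA1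
  intro θ T x hx
  obtain ⟨-, hGin, hout, -, hgrad, hHess, -, -⟩ := hT T
  set g := gradient (fun φ => Lout φ T) (U p α r Lin θ T)
  have hgd := differentiable_gdStep (α := α) hGin
  have hU : ‖fderiv ℝ (gdStep p α Lin T)^[r] θ - 1‖ ≤ (1 + α * L₂) ^ r - 1 :=
    norm_fderiv_iterate_sub_one_le hgd (norm_fderiv_gdStep_sub_one_le hα.le hGin hHess) r θ
  have hcorr : ‖outerGrad p α r Lin Lout θ T - g‖ ≤ L₁ * ((1 + α * L₂) ^ r - 1) :=
    (norm_gradient_comp_sub_gradient_le (hout _) (hgd.iterate r θ)).trans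
      (mul_le_mul (hgrad _) hU (norm_nonneg _) hL₁.le)
  have hweight : ‖x / q‖ ≤ q⁻¹ := by
    rcases hx with rfl | rfl <;> simp [hq.1.le, abs_of_pos hq.1]
  calc ‖Gest p α r q Lin Lout θ T x‖
      ≤ ‖g‖ + ‖x / q‖ * ‖outerGrad p α r Lin Lout θ T - g‖ :=
        (norm_add_le _ _).trans_eq (by rw [norm_smul])
    _ ≤ L₁ + q⁻¹ * (L₁ * ((1 + α * L₂) ^ r - 1)) :=
        add_le_add (hgrad _) (mul_le_mul hweight hcorr (norm_nonneg _) (inv_nonneg.2 hq.1.le))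
    _ = (1 + q⁻¹ * ((1 + α * L₂) ^ r - 1)) * L₁ := by ring

theorem ufo_blo_estimator_bound
    (p r : ℕ) (α : ℝ) (hα : 0 < α)
    (Ωt : Type*) [Nonempty Ωt]
    (Lin Lout : Vec p → Ωt → ℝ) (L₁ L₂ L₃ : ℝ)
    (hA1 : Assumption1 p Lin Lout L₁ L₂ L₃)
    (q : ℝ) (hq : q ∈ Set.Ioc (0 : ℝ) 1) :
    ∀ (θ : Vec p) (T : Ωt) (x : ℝ), x = 0 ∨ x = 1 →
      ‖Gest p α r q Lin Lout θ T x‖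
        ≤ (1 + q⁻¹ * ((1 + α * L₂) ^ r - 1)) * L₁ :=
  ufo_blo_estimator_bound_general p r α hα Ωt Lin Lout L₁ L₂ L₃ hA1 q hq
end
end

section
/- Let a > 0, A > 0, c ∈ ℝ, and define f : ℝ → ℝ by f(x) = (a/2)z² if z ≤ A; f(x) = −(a/6)(z−A)³ + (a/2)(z−A)² + aAz − (a/2)A² if A < z ≤ A+1; and f(x) = ((a/2)+aA)z − a/6 − (a/2)A² − (a/2)A if z > A+1, where z = |x − c|. Then f is twice differentiable on ℝ, its second derivative is f''(x) = a if z ≤ A, f''(x) = −az + a + aA if A < z ≤ A+1, and f''(x) = 0 if z > A+1; consequently 0 ≤ f''(x) ≤ a for all x (so f' is Lipschitz with constant a), f'' is Lipschitz with constant a, |f'(x)| ≤ a(1/2 + A) for all x ∈ ℝ, and f attains its global minimum at x = c. -/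
/-!
Write the loss as `φ |x - c|` with the radial profile `φ = lossProfile a A`. Its three polynomial
pieces agree together with their first derivatives at the knots `A` and `A + 1`, and so do the
pieces of `φ'`; hence `φ` is twice differentiable with `φ'' s = min a (max 0 (a (A + 1 - s)))`,
a clamp that lies in `[0, a]` and is `a`-Lipschitz. On `(-A, A)` the profile is the even quadratic,
so composing with `|·|` costs no smoothness and `f'' x = φ'' |x - c|`. As `φ'' ≥ 0` and
`φ' 0 = 0`, `φ'` is nondecreasing and nonnegative on `[0, ∞)`, hence bounded by its terminal
value `a (1/2 + A)`, and `φ` is nondecreasing there, so `c` is a global minimiser.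
-/

open Set Filter Topology

theorem hasDerivAt_ite_le {f g f' g' : ℝ → ℝ} {b : ℝ}
    (hf : ∀ x, HasDerivAt f (f' x) x) (hg : ∀ x, HasDerivAt g (g' x) x)
    (hb : f b = g b) (hb' : f' b = g' b) (x : ℝ) :
    HasDerivAt (fun x => if x ≤ b then f x else g x) (if x ≤ b then f' x else g' x) x := by
  rcases lt_trichotomy x b with hx | rfl | hx
  · rw [if_pos hx.le]
    refine (hf x).congr_of_eventuallyEq ?_
    filter_upwards [Iio_mem_nhds hx] with y hy using if_pos (le_of_lt hy)
  · have hl : HasDerivWithinAt (fun y => if y ≤ x then f y else g y) (f' x) (Iic x) x :=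
      (hf x).hasDerivWithinAt.congr (fun y hy => if_pos hy) (if_pos le_rfl)
    have hr : HasDerivWithinAt (fun y => if y ≤ x then f y else g y) (f' x) (Ici x) x := by
      refine hb' ▸ (hg x).hasDerivWithinAt.congr (fun y hy => ?_) (by rw [if_pos le_rfl, hb])
      split_ifs with hyx
      · rw [le_antisymm hyx hy, hb]
      · rfl
    rw [if_pos le_rfl, ← hasDerivWithinAt_univ, ← Iic_union_Ici]
    exact hl.union hr
  · rw [if_neg hx.not_ge]
    refine (hg x).congr_of_eventuallyEq ?_
    filter_upwards [Ioi_mem_nhds hx] with y hy using if_neg (not_le.mpr hy)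

section CompAbs

variable {φ φ' φ'' : ℝ → ℝ} {r t : ℝ}

theorem comp_abs_eventuallyEq_of_neg_lt (hsymm : ∀ s, |s| < r → φ (-s) = φ s) (ht : -r < t) :
    (fun s => φ |s|) =ᶠ[𝓝 t] φ := by
  filter_upwards [Ioi_mem_nhds ht] with s hs
  rcases abs_cases s with ⟨hs', -⟩ | ⟨hs', hneg⟩
  · rw [hs']
  · rw [hs', hsymm s (by rw [abs_of_neg hneg]; linarith [hs.out])]

theorem comp_abs_eventuallyEq_of_lt (hsymm : ∀ s, |s| < r → φ (-s) = φ s) (ht : t < r) :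
    (fun s => φ |s|) =ᶠ[𝓝 t] fun s => φ (-s) := by
  filter_upwards [Iio_mem_nhds ht] with s hs
  rcases abs_cases s with ⟨hs', hpos⟩ | ⟨hs', -⟩
  · rw [hs', hsymm s (by rw [abs_of_nonneg hpos]; exact hs)]
  · rw [hs']

theorem deriv_comp_abs_eventuallyEq_of_neg_lt (hsymm : ∀ s, |s| < r → φ (-s) = φ s)
    (hφ : ∀ s, HasDerivAt φ (φ' s) s) (ht : -r < t) :
    deriv (fun s => φ |s|) =ᶠ[𝓝 t] φ' :=
  (comp_abs_eventuallyEq_of_neg_lt hsymm ht).deriv.trans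
    (Eventually.of_forall fun s => (hφ s).deriv)

theorem deriv_comp_abs_eventuallyEq_of_lt (hsymm : ∀ s, |s| < r → φ (-s) = φ s)
    (hφ : ∀ s, HasDerivAt φ (φ' s) s) (ht : t < r) :
    deriv (fun s => φ |s|) =ᶠ[𝓝 t] fun s => -φ' (-s) :=
  (comp_abs_eventuallyEq_of_lt hsymm ht).deriv.trans
    (Eventually.of_forall fun s => by rw [deriv_comp_neg, (hφ _).deriv])

theorem differentiableAt_comp_abs (hsymm : ∀ s, |s| < r → φ (-s) = φ s)
    (hφ : ∀ s, HasDerivAt φ (φ' s) s) (hr : 0 < r) (t : ℝ) :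
    DifferentiableAt ℝ (fun s => φ |s|) t := by
  rcases le_or_gt 0 t with ht | ht
  · exact (comp_abs_eventuallyEq_of_neg_lt hsymm (by linarith)).differentiableAt_iff.mpr
      (hφ t).differentiableAt
  · exact (comp_abs_eventuallyEq_of_lt hsymm (by linarith)).differentiableAt_iff.mpr
      (differentiableAt_comp_neg.mpr (hφ (-t)).differentiableAt)

theorem abs_deriv_comp_abs (hsymm : ∀ s, |s| < r → φ (-s) = φ s)
    (hφ : ∀ s, HasDerivAt φ (φ' s) s) (hr : 0 < r) (t : ℝ) :
    |deriv (fun s => φ |s|) t| = |φ' (|t|)| := by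
  rcases le_or_gt 0 t with ht | ht
  · rw [(deriv_comp_abs_eventuallyEq_of_neg_lt hsymm hφ (by linarith)).eq_of_nhds,
      abs_of_nonneg ht]
  · rw [(deriv_comp_abs_eventuallyEq_of_lt hsymm hφ (by linarith)).eq_of_nhds, abs_neg,
      abs_of_neg ht]

theorem hasDerivAt_deriv_comp_abs (hsymm : ∀ s, |s| < r → φ (-s) = φ s)
    (hφ : ∀ s, HasDerivAt φ (φ' s) s) (hφ' : ∀ s, HasDerivAt φ' (φ'' s) s) (hr : 0 < r)
    (t : ℝ) :
    HasDerivAt (deriv fun s => φ |s|) (φ'' |t|) t := by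
  rcases le_or_gt 0 t with ht | ht
  · rw [abs_of_nonneg ht]
    exact (hφ' t).congr_of_eventuallyEq
      (deriv_comp_abs_eventuallyEq_of_neg_lt hsymm hφ (by linarith))
  · rw [abs_of_neg ht]
    exact ((hφ' (-t)).comp t (hasDerivAt_neg t)).fun_neg.congr_deriv (by ring)
      |>.congr_of_eventuallyEq (deriv_comp_abs_eventuallyEq_of_lt hsymm hφ (by linarith))

end CompAbs

section LossProfile

variable (a A : ℝ)

noncomputable def lossProfile (s : ℝ) : ℝ :=
  if s ≤ A then a / 2 * s ^ 2
  else if s ≤ A + 1 then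
    -(a / 6) * (s - A) ^ 3 + a / 2 * (s - A) ^ 2 + a * A * s - a / 2 * A ^ 2
  else (a / 2 + a * A) * s - a / 6 - a / 2 * A ^ 2 - a / 2 * A

noncomputable def lossProfileDeriv (s : ℝ) : ℝ :=
  if s ≤ A then a * s
  else if s ≤ A + 1 then -(a / 2) * (s - A) ^ 2 + a * (s - A) + a * A
  else a / 2 + a * A

noncomputable def lossProfileDeriv2 (s : ℝ) : ℝ :=
  if s ≤ A then a else if s ≤ A + 1 then -(a * s) + a + a * A else 0

theorem hasDerivAt_lossProfile (s : ℝ) :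
    HasDerivAt (lossProfile a A) (lossProfileDeriv a A s) s := by
  have hquad (x : ℝ) : HasDerivAt (fun s => a / 2 * s ^ 2) (a * x) x :=
    (hasDerivAt_pow 2 x).const_mul (a / 2) |>.congr_deriv
      (by simp only [Nat.cast_ofNat, Nat.add_one_sub_one, pow_one]; ring)
  have hcubic (x : ℝ) : HasDerivAt
      (fun s => -(a / 6) * (s - A) ^ 3 + a / 2 * (s - A) ^ 2 + a * A * s - a / 2 * A ^ 2)
      (-(a / 2) * (x - A) ^ 2 + a * (x - A) + a * A) x := by
    have h := (hasDerivAt_id x).sub_const A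
    exact ((((h.pow 3).const_mul _).add ((h.pow 2).const_mul _)).add
      ((hasDerivAt_id x).const_mul _)).sub_const _ |>.congr_deriv
      (by simp only [Nat.cast_ofNat, id_eq, Nat.add_one_sub_one, pow_one, mul_one]; ring)
  have hlin (x : ℝ) : HasDerivAt
      (fun s => (a / 2 + a * A) * s - a / 6 - a / 2 * A ^ 2 - a / 2 * A) (a / 2 + a * A) x := by
    simpa using ((((hasDerivAt_id x).const_mul (a / 2 + a * A)).sub_const (a / 6)).sub_const
      (a / 2 * A ^ 2)).sub_const (a / 2 * A)
  have hA : A ≤ A + 1 := by linarith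
  exact hasDerivAt_ite_le hquad (hasDerivAt_ite_le hcubic hlin (by ring) (by ring))
    (by simp only [if_pos hA]; ring) (by simp only [if_pos hA]; ring) s

theorem hasDerivAt_lossProfileDeriv (s : ℝ) :
    HasDerivAt (lossProfileDeriv a A) (lossProfileDeriv2 a A s) s := by
  have hlin (x : ℝ) : HasDerivAt (fun s => a * s) a x := by
    simpa using (hasDerivAt_id x).const_mul a
  have hquad (x : ℝ) : HasDerivAt (fun s => -(a / 2) * (s - A) ^ 2 + a * (s - A) + a * A)
      (-(a * x) + a + a * A) x := by
    have h := (hasDerivAt_id x).sub_const A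
    exact (((h.pow 2).const_mul _).add (h.const_mul a)).add_const _ |>.congr_deriv
      (by simp only [Nat.cast_ofNat, id_eq, Nat.add_one_sub_one, pow_one, mul_one]; ring)
  have hA : A ≤ A + 1 := by linarith
  exact hasDerivAt_ite_le hlin (hasDerivAt_ite_le hquad (fun x => hasDerivAt_const x _)
    (by ring) (by ring)) (by simp only [if_pos hA]; ring) (by simp only [if_pos hA]; ring) s

variable {a A}

theorem lossProfile_neg {s : ℝ} (hs : |s| < A) : lossProfile a A (-s) = lossProfile a A s := by
  have hs' : -s ≤ A ∧ s ≤ A := ⟨by linarith [neg_abs_le s], by linarith [le_abs_self s]⟩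
  simp only [lossProfile, if_pos hs'.1, if_pos hs'.2, neg_sq]

theorem lossProfileDeriv2_eq_min_max (ha : 0 ≤ a) (s : ℝ) :
    lossProfileDeriv2 a A s = min a (max 0 (a * (A + 1 - s))) := by
  unfold lossProfileDeriv2
  split_ifs with h₁ h₂
  · rw [max_eq_right (by nlinarith), min_eq_left (by nlinarith)]
  · rw [max_eq_right (by nlinarith), min_eq_right (by nlinarith)]
    ring
  · rw [max_eq_left (by nlinarith), min_eq_right ha]

theorem lossProfileDeriv2_nonneg (ha : 0 ≤ a) (s : ℝ) : 0 ≤ lossProfileDeriv2 a A s := by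
  rw [lossProfileDeriv2_eq_min_max ha]
  exact le_min ha (le_max_left _ _)

theorem lossProfileDeriv2_le (ha : 0 ≤ a) (s : ℝ) : lossProfileDeriv2 a A s ≤ a := by
  rw [lossProfileDeriv2_eq_min_max ha]
  exact min_le_left _ _

theorem lipschitzWith_lossProfileDeriv2 (ha : 0 ≤ a) :
    LipschitzWith a.toNNReal (lossProfileDeriv2 a A) := by
  have h : LipschitzWith a.toNNReal fun s => a * (A + 1 - s) :=
    LipschitzWith.of_dist_le_mul fun s t => by
      rw [Real.dist_eq, Real.dist_eq, Real.coe_toNNReal _ ha, ← mul_sub, abs_mul,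
        abs_of_nonneg ha, sub_sub_sub_cancel_left, abs_sub_comm]
  simpa only [funext (lossProfileDeriv2_eq_min_max ha)] using (h.const_max 0).const_min a

theorem monotone_lossProfileDeriv (ha : 0 ≤ a) : Monotone (lossProfileDeriv a A) :=
  monotone_of_hasDerivAt_nonneg (hasDerivAt_lossProfileDeriv a A) (lossProfileDeriv2_nonneg ha)

theorem lossProfileDeriv_nonneg (ha : 0 ≤ a) (hA : 0 ≤ A) {s : ℝ} (hs : 0 ≤ s) :
    0 ≤ lossProfileDeriv a A s :=
  calc 0 = lossProfileDeriv a A 0 := by simp [lossProfileDeriv, hA]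
    _ ≤ lossProfileDeriv a A s := monotone_lossProfileDeriv ha hs

theorem lossProfileDeriv_le (ha : 0 ≤ a) (s : ℝ) :
    lossProfileDeriv a A s ≤ a * (1 / 2 + A) := by
  by_cases hs : s ≤ A + 1
  · calc lossProfileDeriv a A s ≤ lossProfileDeriv a A (A + 1) := monotone_lossProfileDeriv ha hs
      _ = a * (1 / 2 + A) := by
        rw [lossProfileDeriv, if_neg (by linarith), if_pos le_rfl]
        ring
  · rw [lossProfileDeriv, if_neg (by linarith), if_neg hs]
    linarith

theorem lossProfile_zero_le (ha : 0 ≤ a) (hA : 0 ≤ A) {s : ℝ} (hs : 0 ≤ s) :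
    lossProfile a A 0 ≤ lossProfile a A s :=
  monotoneOn_of_hasDerivWithinAt_nonneg (convex_Ici 0)
    (fun x _ => (hasDerivAt_lossProfile a A x).continuousAt.continuousWithinAt)
    (fun x _ => (hasDerivAt_lossProfile a A x).hasDerivWithinAt)
    (fun _ hx => lossProfileDeriv_nonneg ha hA (interior_subset (s := Ici 0) hx))
    self_mem_Ici hs hs

end LossProfile

theorem counterexample_loss_properties
    (a A c : ℝ) (ha : 0 < a) (hA : 0 < A)
    (f : ℝ → ℝ)
    (hf : ∀ x : ℝ, f x =
      if |x - c| ≤ A then a / 2 * |x - c| ^ 2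
      else if |x - c| ≤ A + 1 then
        -(a / 6) * (|x - c| - A) ^ 3 + a / 2 * (|x - c| - A) ^ 2
          + a * A * |x - c| - a / 2 * A ^ 2
      else (a / 2 + a * A) * |x - c| - a / 6 - a / 2 * A ^ 2 - a / 2 * A) :
    (∀ x, DifferentiableAt ℝ f x) ∧
    (∀ x, DifferentiableAt ℝ (deriv f) x) ∧
    (∀ x : ℝ, deriv (deriv f) x =
      if |x - c| ≤ A then a
      else if |x - c| ≤ A + 1 then -(a * |x - c|) + a + a * A
      else 0) ∧
    (∀ x, 0 ≤ deriv (deriv f) x ∧ deriv (deriv f) x ≤ a) ∧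
    LipschitzWith a.toNNReal (deriv f) ∧
    LipschitzWith a.toNNReal (deriv (deriv f)) ∧
    (∀ x, |deriv f x| ≤ a * (1 / 2 + A)) ∧
    (∀ x, f c ≤ f x) := by
  obtain rfl : f = fun x => lossProfile a A |x - c| := funext hf
  have hsymm : ∀ s, |s| < A → lossProfile a A (-s) = lossProfile a A s :=
    fun _ => lossProfile_neg
  have hφ := hasDerivAt_lossProfile a A
  have hderiv (x : ℝ) : deriv (fun x => lossProfile a A |x - c|) x =
      deriv (fun s => lossProfile a A |s|) (x - c) :=
    deriv_comp_sub_const (fun s => lossProfile a A |s|) c x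
  have hD2 (x : ℝ) : HasDerivAt (deriv fun x => lossProfile a A |x - c|)
      (lossProfileDeriv2 a A |x - c|) x := by
    rw [funext hderiv]
    exact (hasDerivAt_deriv_comp_abs hsymm hφ (hasDerivAt_lossProfileDeriv a A) hA
      (x - c)).comp_sub_const x c
  have hd2 : deriv (deriv fun x => lossProfile a A |x - c|) =
      fun x => lossProfileDeriv2 a A |x - c| :=
    funext fun x => (hD2 x).deriv
  refine ⟨fun x => ?_, fun x => (hD2 x).differentiableAt, fun x => by rw [hd2]; rfl,
    fun x => ?_, ?_, ?_, fun x => ?_, fun x => ?_⟩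
  · exact (differentiableAt_comp_abs hsymm hφ hA (x - c)).comp x
      (differentiableAt_id.sub_const c)
  · rw [hd2]
    exact ⟨lossProfileDeriv2_nonneg ha.le _, lossProfileDeriv2_le ha.le _⟩
  · refine lipschitzWith_of_nnnorm_deriv_le (fun x => (hD2 x).differentiableAt) fun x => ?_
    rw [(hD2 x).deriv, ← NNReal.coe_le_coe, coe_nnnorm, Real.norm_eq_abs,
      Real.coe_toNNReal _ ha.le, abs_of_nonneg (lossProfileDeriv2_nonneg ha.le _)]
    exact lossProfileDeriv2_le ha.le _
  · rw [hd2]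
    have hdist : LipschitzWith 1 fun x : ℝ => |x - c| := LipschitzWith.dist_left c
    exact mul_one a.toNNReal ▸ (lipschitzWith_lossProfileDeriv2 ha.le).comp hdist
  · rw [hderiv, abs_deriv_comp_abs hsymm hφ hA,
      abs_of_nonneg (lossProfileDeriv_nonneg ha.le hA.le (abs_nonneg _))]
    exact lossProfileDeriv_le ha.le _
  · simp only [sub_self, abs_zero]
    exact lossProfile_zero_le ha.le hA.le (abs_nonneg _)
end

section
/- Let a₁, a₂, α > 0 with 0 < αa₁ < 1, 0 < αa₂ < 1 and a₁ ≠ a₂, and let r ∈ ℕ, r ≥ 1. Then (a₁(1 − αa₁)^{2r} + a₂(1 − αa₂)^{2r}) / (a₁(1 − αa₁)^r + a₂(1 − αa₂)^r) · (1 − αa₁)^r − (1 − αa₂)^{2r} ≠ 0. -/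
/-!
With `cᵢ = (1 - α aᵢ) ^ r > 0` the quantity factors as
`(c₁ - c₂) (a₁c₁(c₁ + c₂) + a₂c₂²) / (a₁c₁ + a₂c₂)`, whose only factor that can vanish is `c₁ - c₂`;
and `c₁ ≠ c₂` because `a ↦ (1 - α a) ^ r` is injective where the base is positive.
-/

theorem weighted_ratio_mul_sub_sq_eq {K : Type*} [Field K] {a₁ a₂ c₁ c₂ : K}
    (hden : a₁ * c₁ + a₂ * c₂ ≠ 0) :
    (a₁ * c₁ ^ 2 + a₂ * c₂ ^ 2) / (a₁ * c₁ + a₂ * c₂) * c₁ - c₂ ^ 2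
      = (c₁ - c₂) * (a₁ * c₁ * (c₁ + c₂) + a₂ * c₂ ^ 2) / (a₁ * c₁ + a₂ * c₂) := by
  field_simp
  ring

theorem weighted_ratio_mul_sub_sq_ne_zero {K : Type*} [Field K] [LinearOrder K]
    [IsStrictOrderedRing K] {a₁ a₂ c₁ c₂ : K} (ha₁ : 0 < a₁) (ha₂ : 0 < a₂)
    (hc₁ : 0 < c₁) (hc₂ : 0 < c₂) (hc : c₁ ≠ c₂) :
    (a₁ * c₁ ^ 2 + a₂ * c₂ ^ 2) / (a₁ * c₁ + a₂ * c₂) * c₁ - c₂ ^ 2 ≠ 0 := by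
  have hden : 0 < a₁ * c₁ + a₂ * c₂ := by positivity
  rw [weighted_ratio_mul_sub_sq_eq hden.ne']
  exact div_ne_zero (mul_ne_zero (sub_ne_zero_of_ne hc) (by positivity)) hden.ne'

theorem one_sub_mul_pow_injOn {K : Type*} [Field K] [LinearOrder K] [IsStrictOrderedRing K]
    {α : K} (hα : α ≠ 0) {r : ℕ} (hr : r ≠ 0) :
    Set.InjOn (fun a : K => (1 - α * a) ^ r) {a | 0 ≤ 1 - α * a} := by
  intro a₁ ha₁ a₂ ha₂ h
  have hbase : 1 - α * a₁ = 1 - α * a₂ := (pow_left_inj₀ ha₁ ha₂ hr).mp h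
  exact mul_left_cancel₀ hα (by linarith)

theorem counterexample_offset_nonzero
    (a₁ a₂ α : ℝ) (ha₁ : 0 < a₁) (ha₂ : 0 < a₂) (hα : 0 < α)
    (hαa₁ : α * a₁ < 1) (hαa₂ : α * a₂ < 1) (hne : a₁ ≠ a₂)
    (r : ℕ) (hr : 1 ≤ r) :
    (a₁ * (1 - α * a₁) ^ (2 * r) + a₂ * (1 - α * a₂) ^ (2 * r))
        / (a₁ * (1 - α * a₁) ^ r + a₂ * (1 - α * a₂) ^ r)
        * (1 - α * a₁) ^ r
      - (1 - α * a₂) ^ (2 * r) ≠ 0 := by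
  have h₁ : 0 < 1 - α * a₁ := by linarith
  have h₂ : 0 < 1 - α * a₂ := by linarith
  rw [pow_mul', pow_mul']
  refine weighted_ratio_mul_sub_sq_ne_zero ha₁ ha₂ (pow_pos h₁ r) (pow_pos h₂ r) fun h => hne ?_
  exact one_sub_mul_pow_injOn hα.ne' (by omega) h₁.le h₂.le h
end
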